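/- Let G be a simple connected graph with n ≥ 2 vertices and m edges, and write a_k = d(G,k). Then the betweenness centrality of the Mycielskian of G is B⁻(μ(G)) = (4n² − 2n − 7m − 4a_2 − a_3)/(2n + 1). -/

import Mathlib

open SimpleGraph Polynomial Finset

/-- The Mycielskian `μ(G)` of a simple graph `G`. Vertices `Sum.inl v` are the original
vertices `v_i`, vertices `Sum.inr (Sum.inl v)` are the shadow vertices `u_i`, and
`Sum.inr (Sum.inr ())` is the apex vertex `w`.  Edges: the edges of `G`, the edges `w u_i`,
and the edges `u_i v_j`, `u_j v_i` for every edge `v_i v_j` of `G`. -/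
def mycielskian {V : Type*} (G : SimpleGraph V) : SimpleGraph (V ⊕ V ⊕ Unit) :=
  SimpleGraph.fromRel (fun a b =>
    match a, b with
    | Sum.inl a, Sum.inl b => G.Adj a b
    | Sum.inl a, Sum.inr (Sum.inl b) => G.Adj a b
    | Sum.inr (Sum.inl _), Sum.inr (Sum.inr _) => True
    | _, _ => False)

/-- `distCount G k` is `d(G,k)`, the number of unordered pairs of distinct vertices of `G`
whose graph distance is exactly `k`. -/
noncomputable def distCount {V : Type*} (G : SimpleGraph V) (k : ℕ) : ℕ :=
  Nat.card {e : Sym2 V // ¬ e.IsDiag ∧ Sym2.lift ⟨G.dist, fun _ _ => G.dist_comm⟩ e = k}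

/-- The Hosoya polynomial `H(G,x) = Σ_{k=1}^{D(G)} d(G,k) x^k` (with rational coefficients). -/
noncomputable def hosoya {V : Type*} (G : SimpleGraph V) : Polynomial ℚ :=
  ∑ k ∈ Finset.Icc 1 G.diam, (distCount G k : ℚ) • Polynomial.X ^ k

/-- The Wiener index `W(G)`: the sum of distances over all unordered pairs of distinct
vertices (the diagonal contributes `0`, so we may sum over ordered pairs and halve). -/
noncomputable def wiener {V : Type*} (G : SimpleGraph V) [Fintype V] : ℚ :=
  (∑ u : V, ∑ v : V, (G.dist u v : ℚ)) / 2

/-- The Hyper-Wiener index `WW(G) = (1/2) Σ_{{u,v}} (d(u,v)² + d(u,v))`. -/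
noncomputable def hyperWiener {V : Type*} (G : SimpleGraph V) [Fintype V] : ℚ :=
  (∑ u : V, ∑ v : V, ((G.dist u v : ℚ) ^ 2 + (G.dist u v : ℚ))) / 4

/-- The TSZ index `TSZ(G) = (1/6) Σ_{{u,v}} d³ + (1/2) Σ_{{u,v}} d² + (1/3) Σ_{{u,v}} d`. -/
noncomputable def tszIndex {V : Type*} (G : SimpleGraph V) [Fintype V] : ℚ :=
  (∑ u : V, ∑ v : V, (G.dist u v : ℚ) ^ 3) / 12
    + (∑ u : V, ∑ v : V, (G.dist u v : ℚ) ^ 2) / 4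
    + (∑ u : V, ∑ v : V, (G.dist u v : ℚ)) / 6

/-- The Harary index `Har(G) = Σ_{{u,v}} 1/d(u,v)` (diagonal terms are `0⁻¹ = 0`). -/
noncomputable def harary {V : Type*} (G : SimpleGraph V) [Fintype V] : ℚ :=
  (∑ u : V, ∑ v : V, ((G.dist u v : ℚ))⁻¹) / 2

/-- The closeness `C(G) = Σ_u Σ_{v ≠ u} 2^{-d(u,v)}` over ordered pairs of distinct vertices. -/
noncomputable def closeness {V : Type*} (G : SimpleGraph V) [Fintype V] : ℚ :=
  letI := Classical.decEq V
  ∑ u : V, ∑ v : V, if v = u then 0 else ((1 : ℚ) / 2) ^ (G.dist u v)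

/-- `σ_{uv}`: the number of shortest paths (walks of length `dist u v`) from `u` to `v`. -/
noncomputable def numSP {V : Type*} (G : SimpleGraph V) (u v : V) : ℕ :=
  Nat.card {p : G.Walk u v // p.length = G.dist u v}

/-- `σ_{uv}(w)`: the number of shortest paths from `u` to `v` passing through `w`. -/
noncomputable def numSPthrough {V : Type*} (G : SimpleGraph V) (w u v : V) : ℕ :=
  Nat.card {p : G.Walk u v // p.length = G.dist u v ∧ w ∈ p.support}

/-- The betweenness centrality `B_w = Σ_{{u,v}, u ≠ w ≠ v} σ_{uv}(w)/σ_{uv}` of a vertex `w`,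
summed over unordered pairs of distinct vertices (ordered pairs, halved). -/
noncomputable def btwVertex {V : Type*} (G : SimpleGraph V) [Fintype V] (w : V) : ℚ :=
  letI := Classical.decEq V
  (∑ u : V, ∑ v : V,
    if u ≠ v ∧ u ≠ w ∧ v ≠ w then (numSPthrough G w u v : ℚ) / (numSP G u v) else 0) / 2

/-- The betweenness centrality of a graph: `B⁻(G) = (1/N) Σ_w B_w`. -/
noncomputable def btw {V : Type*} (G : SimpleGraph V) [Fintype V] : ℚ :=
  (∑ w : V, btwVertex G w) / (Fintype.card V)

/-- The star graph `S_n`: center `0` joined to the `n` leaves `1, …, n`. -/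
def starGraph (n : ℕ) : SimpleGraph (Fin (n + 1)) :=
  SimpleGraph.fromRel (fun a _ => a = 0)

/-- The join `G₁ ⊕ G₂` of two graphs on disjoint vertex sets: all edges of `G₁`, all edges
of `G₂`, and all edges between `V(G₁)` and `V(G₂)`. -/
def joinGraph {V₁ V₂ : Type*} (G₁ : SimpleGraph V₁) (G₂ : SimpleGraph V₂) :
    SimpleGraph (V₁ ⊕ V₂) :=
  SimpleGraph.fromRel (fun a b =>
    match a, b with
    | Sum.inl a, Sum.inl b => G₁.Adj a b
    | Sum.inr a, Sum.inr b => G₂.Adj a b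
    | Sum.inl _, Sum.inr _ => True
    | _, _ => False)

/-! In a connected graph every shortest `u`–`v` path has `d(u,v) - 1` interior vertices, so
`∑_w σ_{uv}(w)/σ_{uv} = d(u,v) - 1` and `B⁻(H) = (W(H) - C(N,2))/N` with `W` the Wiener index.
In `μ(G)` a shortest walk either passes through the apex `w`, at distance `1` from every `u_i`
and `2` from every `v_i`, or projects (`u_i, v_i ↦ v_i`) onto a walk of `G` of the same length.
Hence `d(v_i,v_j) = min(d(i,j),4)`, `d(u_i,v_j) = min(d(i,j),3)` for `i ≠ j`, `d(u_i,v_i) = 2`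
and `d(u_i,u_j) = 2`, so `W(μ(G))` is a linear combination of `n²`, `n`, `m`, `a₂`, `a₃`. -/

namespace SimpleGraph
variable {V W : Type*} {G : SimpleGraph V} {H : SimpleGraph W}

lemma Walk.dist_add_dist_le_length {a b c : W} (p : H.Walk a b) (hc : c ∈ p.support) :
    H.dist a c + H.dist c b ≤ p.length := by
  classical
  calc H.dist a c + H.dist c b ≤ (p.takeUntil c hc).length + (p.dropUntil c hc).length :=
        add_le_add (dist_le _) (dist_le _)
    _ = p.length := by rw [← Walk.length_append, Walk.take_spec]

lemma dist_le_length_of_forall_dart_adj {f : W → V} {a b : W} (p : H.Walk a b)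
    (hp : ∀ d ∈ p.darts, G.Adj (f d.fst) (f d.snd)) : G.dist (f a) (f b) ≤ p.length := by
  induction p with
  | nil => simp
  | cons h q ih =>
    simp only [Walk.darts_cons, List.mem_cons, forall_eq_or_imp] at hp
    calc G.dist (f _) (f _) ≤ G.dist (f _) (f _) + G.dist (f _) (f _) :=
          hp.1.reachable.dist_triangle_left _
      _ ≤ 1 + q.length := by
        rw [dist_eq_one_iff_adj.mpr hp.1]; exact Nat.add_le_add_left (ih hp.2) 1
      _ = _ := by rw [Walk.length_cons, add_comm]

lemma dist_eq_two_of_adj_of_adj {a b c : W} (hac : H.Adj a c) (hcb : H.Adj c b) (hab : a ≠ b)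
    (hnadj : ¬ H.Adj a b) : H.dist a b = 2 :=
  le_antisymm (dist_le (.cons hac (.cons hcb .nil)))
    ((hac.reachable.trans hcb.reachable).one_lt_dist_of_ne_of_not_adj hab hnadj)

variable {k : ℕ}

def distGraph (G : SimpleGraph V) (k : ℕ) : SimpleGraph V :=
  SimpleGraph.fromRel fun a b => G.dist a b = k

lemma distGraph_adj {a b : V} (hk : k ≠ 0) : (G.distGraph k).Adj a b ↔ G.dist a b = k := by
  refine ⟨fun h => ?_, fun h => ⟨fun hab => hk (by simp [← h, hab]), .inl h⟩⟩
  rcases h.2 with h | h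
  · exact h
  · rwa [dist_comm]

lemma distGraph_one : G.distGraph 1 = G := by
  ext a b
  rw [distGraph_adj one_ne_zero, dist_eq_one_iff_adj]

end SimpleGraph

section Betweenness
variable {W : Type*} [Fintype W] {H : SimpleGraph W} {u v : W}

lemma numSP_eq_card [DecidableEq W] [DecidableRel H.Adj] :
    numSP H u v = #(H.finsetWalkLength (H.dist u v) u v) := by
  rw [numSP, ← Nat.card_eq_finsetCard]
  exact Nat.card_congr (Equiv.subtypeEquivRight fun p => mem_finsetWalkLength_iff.symm)

lemma numSPthrough_eq_card [DecidableEq W] [DecidableRel H.Adj] (w : W) :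
    numSPthrough H w u v = #{p ∈ H.finsetWalkLength (H.dist u v) u v | w ∈ p.support} := by
  rw [numSPthrough, ← Nat.card_eq_finsetCard]
  exact Nat.card_congr (Equiv.subtypeEquivRight fun p => by simp [mem_finsetWalkLength_iff])

lemma numSP_pos (hr : H.Reachable u v) : 0 < numSP H u v := by
  classical
  obtain ⟨p, hp⟩ := hr.exists_walk_length_eq_dist
  rw [numSP_eq_card]
  exact card_pos.mpr ⟨p, mem_finsetWalkLength_iff.mpr hp⟩

lemma sum_numSPthrough_eq [DecidableEq W] (huv : u ≠ v) :
    ∑ w ∈ univ \ {u, v}, numSPthrough H w u v = (H.dist u v - 1) * numSP H u v := by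
  classical
  set S := H.finsetWalkLength (H.dist u v) u v
  have hinterior : ∀ p ∈ S,
      #((univ \ {u, v}).bipartiteAbove (fun p w => w ∈ p.support) p) = H.dist u v - 1 := by
    intro p hp
    have hlen := mem_finsetWalkLength_iff.mp hp
    have hfilter : (univ \ {u, v}).bipartiteAbove (fun p w => w ∈ p.support) p
        = p.support.toFinset \ {u, v} := by
      ext w; simp [and_comm]
    rw [hfilter, card_sdiff_of_subset (by simp [insert_subset_iff]),
      List.toFinset_card_of_nodup (p.isPath_of_length_eq_dist hlen).support_nodup,
      Walk.length_support, hlen, card_pair huv]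
    omega
  simp_rw [numSPthrough_eq_card, numSP_eq_card]
  calc ∑ w ∈ univ \ {u, v}, #{p ∈ S | w ∈ p.support}
      = ∑ p ∈ S, #((univ \ {u, v}).bipartiteAbove (fun p w => w ∈ p.support) p) :=
        (sum_card_bipartiteAbove_eq_sum_card_bipartiteBelow _).symm
    _ = (H.dist u v - 1) * #S := by
      rw [sum_congr rfl hinterior, sum_const, smul_eq_mul, mul_comm]

lemma sum_btwVertex_summand_eq [DecidableEq W] (hr : H.Reachable u v) :
    ∑ w, (if u ≠ v ∧ u ≠ w ∧ v ≠ w then (numSPthrough H w u v : ℚ) / numSP H u v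
      else 0)
      = H.dist u v - if u = v then 0 else 1 := by
  by_cases huv : u = v
  · simp [huv]
  have hd : 1 ≤ H.dist u v := hr.pos_dist_of_ne huv
  have hσ : (numSP H u v : ℚ) ≠ 0 := by exact_mod_cast (numSP_pos hr).ne'
  rw [← sum_filter, show ({w | u ≠ v ∧ u ≠ w ∧ v ≠ w} : Finset W) = univ \ {u, v} by
    ext w; simp only [mem_filter, mem_univ, true_and, mem_sdiff, mem_insert, mem_singleton]; tauto]
  rw [← sum_div, ← Nat.cast_sum, sum_numSPthrough_eq huv, Nat.cast_mul, Nat.cast_sub hd,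
    mul_div_cancel_right₀ _ hσ]
  simp [huv]

lemma btw_eq_of_connected (hc : H.Connected) :
    btw H = (wiener H - (Fintype.card W).choose 2) / Fintype.card W := by
  classical
  have hsum : ∑ w, btwVertex H w = wiener H - (Fintype.card W).choose 2 := by
    simp only [btwVertex, wiener, ← sum_div]
    rw [sum_comm, sum_congr rfl fun u _ => sum_comm]
    rw [sum_congr rfl fun u _ => sum_congr rfl fun v _ => sum_btwVertex_summand_eq (hc u v)]
    have hoff (u v : W) : (if u = v then 0 else 1 : ℚ) = 1 - if u = v then 1 else 0 := by
      split_ifs <;> norm_num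
    simp only [sum_sub_distrib, hoff, sum_ite_eq, mem_univ, if_true, sum_const, card_univ,
      nsmul_eq_mul, mul_one, Nat.cast_choose_two]
    ring
  rw [_root_.btw, hsum]

end Betweenness

section Counting
variable {V : Type*} {G : SimpleGraph V} {k : ℕ}

lemma distCount_eq_card_edgeSet : distCount G k = Nat.card (G.distGraph k).edgeSet := by
  refine Nat.card_congr (Equiv.subtypeEquivRight fun e => ?_)
  induction e using Sym2.ind with
  | _ a b =>
    simp only [Sym2.mk_isDiag_iff, Sym2.lift_mk, mem_edgeSet, distGraph, fromRel_adj,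
      dist_comm (u := b), or_self]

lemma distCount_one : distCount G 1 = Nat.card G.edgeSet := by
  rw [distCount_eq_card_edgeSet, distGraph_one]

variable [Fintype V]

lemma sum_sum_ite_dist_eq (hk : k ≠ 0) :
    ∑ a, ∑ b, (if G.dist a b = k then 1 else 0 : ℚ) = 2 * distCount G k := by
  classical
  have hdeg : ∀ a, ∑ b, (if G.dist a b = k then 1 else 0 : ℚ) = (G.distGraph k).degree a := by
    intro a
    simp [← card_neighborFinset_eq_degree, neighborFinset_eq_filter, distGraph_adj hk]
  rw [sum_congr rfl fun a _ => hdeg a, ← Nat.cast_sum, sum_degrees_eq_twice_card_edges,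
    distCount_eq_card_edgeSet, edgeFinset_card, Nat.card_eq_fintype_card, Nat.cast_mul,
    Nat.cast_two]

lemma sum_sum_ite_dist_eq_zero (hc : G.Preconnected) :
    ∑ a, ∑ b, (if G.dist a b = 0 then 1 else 0 : ℚ) = Fintype.card V := by
  classical
  simp [(hc _ _).dist_eq_zero_iff]

end Counting

section Mycielskian
variable {V : Type*} {G : SimpleGraph V} {a b : V} {u : Unit}

@[simp] lemma mycielskian_adj_inl_inl :
    (mycielskian G).Adj (.inl a) (.inl b) ↔ G.Adj a b := by
  simpa [mycielskian, G.adj_comm b a] using G.ne_of_adj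

@[simp] lemma mycielskian_adj_inl_shadow :
    (mycielskian G).Adj (.inl a) (.inr (.inl b)) ↔ G.Adj a b := by
  simp [mycielskian]

@[simp] lemma mycielskian_adj_shadow_inl :
    (mycielskian G).Adj (.inr (.inl a)) (.inl b) ↔ G.Adj a b := by
  rw [adj_comm, mycielskian_adj_inl_shadow, adj_comm]

@[simp] lemma mycielskian_adj_shadow_apex :
    (mycielskian G).Adj (.inr (.inl a)) (.inr (.inr u)) := by
  simp [mycielskian]

@[simp] lemma mycielskian_adj_apex_shadow :
    (mycielskian G).Adj (.inr (.inr u)) (.inr (.inl a)) := by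
  simp [mycielskian]

@[simp] lemma not_mycielskian_adj_shadow_shadow :
    ¬ (mycielskian G).Adj (.inr (.inl a)) (.inr (.inl b)) := by
  simp [mycielskian]

@[simp] lemma not_mycielskian_adj_apex_inl :
    ¬ (mycielskian G).Adj (.inr (.inr u)) (.inl a) := by
  simp [mycielskian]

def mycielskianInlHom (G : SimpleGraph V) : G →g mycielskian G :=
  ⟨Sum.inl, mycielskian_adj_inl_inl.mpr⟩

/-- The value `v₀` at the apex is junk: only walks avoiding the apex get projected. -/
def mycielskianProj (v₀ : V) : V ⊕ V ⊕ Unit → V :=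
  Sum.elim id (Sum.elim id fun _ => v₀)

lemma mycielskian_adj_proj (v₀ : V) {x y : V ⊕ V ⊕ Unit} (h : (mycielskian G).Adj x y)
    (hx : x ≠ .inr (.inr ())) (hy : y ≠ .inr (.inr ())) :
    G.Adj (mycielskianProj v₀ x) (mycielskianProj v₀ y) := by
  rcases x with a | a | ⟨⟩ <;> rcases y with b | b | ⟨⟩ <;> simp_all [mycielskianProj]

lemma mycielskian_dist_apex_shadow :
    (mycielskian G).dist (.inr (.inr ())) (.inr (.inl a)) = 1 :=
  dist_eq_one_iff_adj.mpr (by simp)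

lemma mycielskian_dist_shadow_shadow [DecidableEq V] :
    (mycielskian G).dist (.inr (.inl a)) (.inr (.inl b)) = if a = b then 0 else 2 := by
  split_ifs with hab
  · simp [hab]
  · exact dist_eq_two_of_adj_of_adj (c := .inr (.inr ())) (by simp) (by simp) (by simpa) (by simp)

variable [Nontrivial V]

lemma mycielskian_dist_apex_inl (hc : G.Connected) :
    (mycielskian G).dist (.inr (.inr ())) (.inl a) = 2 := by
  obtain ⟨b, hab⟩ := hc.preconnected.exists_adj_of_nontrivial a
  exact dist_eq_two_of_adj_of_adj (c := .inr (.inl b)) (by simp) (by simpa using hab.symm)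
    (by simp) (by simp)

lemma mycielskian_dist_shadow_inl_self (hc : G.Connected) :
    (mycielskian G).dist (.inr (.inl a)) (.inl a) = 2 := by
  obtain ⟨b, hab⟩ := hc.preconnected.exists_adj_of_nontrivial a
  exact dist_eq_two_of_adj_of_adj (c := .inl b) (by simpa using hab) (by simpa using hab.symm)
    (by simp) (by simp)

lemma mycielskian_reachable_apex (hc : G.Connected) (x : V ⊕ V ⊕ Unit) :
    (mycielskian G).Reachable (.inr (.inr ())) x := by
  rcases x with a | a | ⟨⟩
  · exact Reachable.of_dist_ne_zero (by simp [mycielskian_dist_apex_inl hc])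
  · exact mycielskian_adj_apex_shadow.reachable
  · rfl

lemma mycielskian_connected (hc : G.Connected) : (mycielskian G).Connected :=
  (connected_iff_exists_forall_reachable _).mpr ⟨_, mycielskian_reachable_apex hc⟩

lemma min_le_mycielskian_dist (hc : G.Connected) (v₀ : V) (x y : V ⊕ V ⊕ Unit) :
    min (G.dist (mycielskianProj v₀ x) (mycielskianProj v₀ y))
      ((mycielskian G).dist (.inr (.inr ())) x + (mycielskian G).dist (.inr (.inr ())) y)
      ≤ (mycielskian G).dist x y := by
  obtain ⟨p, hp⟩ := (mycielskian_connected hc).exists_walk_length_eq_dist x y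
  rw [← hp]
  by_cases happ : .inr (.inr ()) ∈ p.support
  · exact min_le_of_right_le (dist_comm (G := mycielskian G) ▸ p.dist_add_dist_le_length happ)
  · refine min_le_of_left_le (dist_le_length_of_forall_dart_adj p fun d hd =>
      mycielskian_adj_proj v₀ d.adj ?_ ?_)
    · exact fun h => happ (h ▸ p.dart_fst_mem_support_of_mem_darts hd)
    · exact fun h => happ (h ▸ p.dart_snd_mem_support_of_mem_darts hd)

lemma mycielskian_dist_le_dist_apex_add (hc : G.Connected) (x y : V ⊕ V ⊕ Unit) :
    (mycielskian G).dist x y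
      ≤ (mycielskian G).dist (.inr (.inr ())) x + (mycielskian G).dist (.inr (.inr ())) y := by
  rw [dist_comm (u := .inr (.inr ())) (v := x)]
  exact (mycielskian_reachable_apex hc x).symm.dist_triangle_left y

lemma mycielskian_dist_inl_inl (hc : G.Connected) :
    (mycielskian G).dist (.inl a) (.inl b) = min (G.dist a b) 4 := by
  obtain ⟨p, hp⟩ := hc.exists_walk_length_eq_dist a b
  have hlift : (mycielskian G).dist (.inl a) (.inl b) ≤ (p.map (mycielskianInlHom G)).length :=
    dist_le _
  have hapex := mycielskian_dist_le_dist_apex_add hc (.inl a) (.inl b)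
  have hlow := min_le_mycielskian_dist hc a (.inl a) (.inl b)
  simp only [Walk.length_map, hp, mycielskianProj, Sum.elim_inl, id,
    mycielskian_dist_apex_inl hc] at hlift hapex hlow
  omega

lemma mycielskian_dist_shadow_inl [DecidableEq V] (hc : G.Connected) :
    (mycielskian G).dist (.inr (.inl a)) (.inl b) = if a = b then 2 else min (G.dist a b) 3 := by
  split_ifs with hab
  · exact hab ▸ mycielskian_dist_shadow_inl_self hc
  obtain ⟨p, hp⟩ := hc.exists_walk_length_eq_dist a b
  cases p with
  | nil => exact absurd rfl hab
  | @cons _ c _ hac q =>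
    have hstep := (mycielskian_connected hc).dist_triangle (u := .inr (.inl a)) (v := .inl c)
      (w := .inl b)
    have hapex := mycielskian_dist_le_dist_apex_add hc (.inr (.inl a)) (.inl b)
    have hlow := min_le_mycielskian_dist hc a (.inr (.inl a)) (.inl b)
    have hq := dist_le q
    simp only [dist_eq_one_iff_adj.mpr (mycielskian_adj_shadow_inl.mpr hac),
      mycielskian_dist_inl_inl hc, Walk.length_cons, mycielskianProj, Sum.elim_inl, Sum.elim_inr,
      id, mycielskian_dist_apex_shadow, mycielskian_dist_apex_inl hc] at hstep hp hapex hlow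
    omega

lemma mycielskian_dist_block (hc : G.Connected) (a b : V) :
    ((mycielskian G).dist (.inl a) (.inl b) + (mycielskian G).dist (.inl a) (.inr (.inl b))
      + (mycielskian G).dist (.inr (.inl a)) (.inl b)
      + (mycielskian G).dist (.inr (.inl a)) (.inr (.inl b)) : ℚ)
      = 12 - 8 * (if G.dist a b = 0 then 1 else 0) - 7 * (if G.dist a b = 1 then 1 else 0)
        - 4 * (if G.dist a b = 2 then 1 else 0) - (if G.dist a b = 3 then 1 else 0) := by
  -- the four distances add up to 4, 5, 8, 11, 12 for `d(a,b)` = 0, 1, 2, 3, ≥ 4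
  classical
  rw [(mycielskian G).dist_comm (u := .inl a) (v := .inr (.inl b)), mycielskian_dist_inl_inl hc,
    mycielskian_dist_shadow_inl hc, mycielskian_dist_shadow_inl hc, mycielskian_dist_shadow_shadow,
    G.dist_comm (u := b)]
  by_cases hab : a = b
  · subst hab; norm_num
  have hd : G.dist a b ≠ 0 := fun h => hab (hc.dist_eq_zero_iff.mp h)
  simp only [hab, Ne.symm hab, if_false]
  generalize G.dist a b = d at hd ⊢
  match d with
  | 0 => exact absurd rfl hd
  | 1 | 2 | 3 => norm_num
  | d + 4 =>
    rw [min_eq_right (by omega), min_eq_right (by omega)]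
    norm_num [show d + 4 ≠ 1 by omega, show d + 4 ≠ 2 by omega, show d + 4 ≠ 3 by omega]

lemma sum_dist_mycielskian [Fintype V] (hc : G.Connected) :
    ∑ x, ∑ y, ((mycielskian G).dist x y : ℚ)
      = 12 * (Fintype.card V : ℚ) ^ 2 - 2 * Fintype.card V - 14 * distCount G 1
        - 8 * distCount G 2 - 2 * distCount G 3 := by
  classical
  have hblocks := sum_congr rfl fun a (_ : a ∈ univ) =>
    sum_congr rfl fun b (_ : b ∈ univ) => mycielskian_dist_block hc a b
  simp only [sum_add_distrib, sum_sub_distrib, ← mul_sum,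
    sum_sum_ite_dist_eq_zero hc.preconnected, sum_sum_ite_dist_eq one_ne_zero,
    sum_sum_ite_dist_eq two_ne_zero, sum_sum_ite_dist_eq three_ne_zero] at hblocks
  simp only [Fintype.sum_sum_type, Fintype.sum_unique, PUnit.default_eq_unit,
    dist_comm (G := mycielskian G) (v := .inr (.inr ())), dist_self,
    mycielskian_dist_apex_inl hc, mycielskian_dist_apex_shadow, sum_add_distrib, sum_const,
    card_univ, Fintype.card_unit, nsmul_eq_mul] at hblocks ⊢
  push_cast at hblocks ⊢
  linear_combination hblocks

end Mycielskian

/-- For a connected graph `G` with `n ≥ 2` vertices and `m` edges, with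
`a_k = d(G,k)`, the betweenness centrality of `μ(G)` is
`(4n² - 2n - 7m - 4a₂ - a₃)/(2n + 1)`. -/
theorem stmt_16 {V : Type*} [Fintype V] (G : SimpleGraph V) (n m : ℕ)
    (hn : Fintype.card V = n) (hn2 : 2 ≤ n) (hm : Nat.card G.edgeSet = m)
    (hc : G.Connected) :
    btw (mycielskian G) =
      (4 * (n : ℚ) ^ 2 - 2 * n - 7 * m - 4 * distCount G 2 - distCount G 3) /
        (2 * n + 1) := by
  have : Nontrivial V := Fintype.one_lt_card_iff_nontrivial.mp (by omega)
  rw [btw_eq_of_connected (mycielskian_connected hc), wiener, sum_dist_mycielskian hc,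
    distCount_one, hm]
  simp only [Fintype.card_sum, Fintype.card_unit, hn, Nat.cast_choose_two]
  push_cast
  field_simp
  ring
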